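/- If (log n + ω(1))/n ≤ p ≤ (1.1 log n)/n, then asymptotically almost surely in G ~ G(n,p): for every nonempty vertex set S consisting entirely of vertices of degree greater than log n/6, with |S| ≤ n/(log n)³, the number of edges between S and its complement is at least (log n/10)·|S|. -/

import Mathlib

open scoped Classical
open Filter

/-- Number of edges of a finite simple graph. -/
noncomputable def edgeCount {V : Type*} [Fintype V] (G : SimpleGraph V) : ℕ :=
  G.edgeFinset.card

/-- `G` contains `k` pairwise edge-disjoint spanning trees. -/
def HasDisjSpanningTrees {V : Type*} (G : SimpleGraph V) (k : ℕ) : Prop :=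
  ∃ f : Fin k → SimpleGraph V, (∀ i, f i ≤ G) ∧ (∀ i, (f i).IsTree) ∧
    ∀ i j, i ≠ j → Disjoint (f i).edgeSet (f j).edgeSet

/-- Spanning tree packing number: the maximum number of pairwise
edge-disjoint spanning trees of `G`. -/
noncomputable def stp {V : Type*} (G : SimpleGraph V) : ℕ :=
  sSup {k | HasDisjSpanningTrees G k}

/-- Number of edges of `G` between `S` and its complement. -/
noncomputable def crossCount {V : Type*} [Fintype V] (G : SimpleGraph V) (S : Finset V) : ℕ :=
  ((S ×ˢ Sᶜ).filter fun e => G.Adj e.1 e.2).card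

/-- Number of crossing edges of a partition `P` of the vertex set:
edges whose two endpoints lie in different parts of `P`. -/
noncomputable def partCross {V : Type*} [Fintype V] (G : SimpleGraph V)
    (P : Finpartition (Finset.univ : Finset V)) : ℕ :=
  (G.edgeFinset.filter fun e => ∀ t ∈ P.parts, ¬ ∀ v ∈ e, v ∈ t).card

/-- Probability that the Erdős–Rényi random graph `G(n,p)` satisfies `Q`. -/
noncomputable def grProb (n : ℕ) (p : ℝ) (Q : SimpleGraph (Fin n) → Prop) : ℝ :=
  ∑ G : SimpleGraph (Fin n),
    if Q G then p ^ edgeCount G * (1 - p) ^ (n.choose 2 - edgeCount G) else 0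

/-
If `S` consists of vertices of degree above `L / 6` and has fewer than `L / 10 · |S|` boundary
edges, then `S` spans more than `|S| L / 30` edges, since the degrees in `S` add up to twice the
inner edges plus the boundary. Take `L = log n`, `p ≤ 1.1 L / n` and `|S| ≤ n / L³`. A fixed `S`
spans `m ≥ |S| L / 30` edges with probability at most `C(|S|², m) pᵐ ≤ (e |S|² p / m)ᵐ
≤ (100 / L³)ᵐ`, which is below `n^(-2|S|)` once `L` is large. A union bound over all nonempty `S`
bounds the failure probability by `(1 + n⁻²)ⁿ - 1 ≤ e^(1/n) - 1 → 0`.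
-/

open Finset Real

lemma sum_simpleGraph_eq_sum_powerset {V β : Type*} [Fintype V] [DecidableEq V]
    [AddCommMonoid β] (f : Finset (Sym2 V) → β) :
    ∑ G : SimpleGraph V, f G.edgeFinset
      = ∑ t ∈ (⊤ : SimpleGraph V).edgeFinset.powerset, f t := by
  refine sum_nbij' (fun G => G.edgeFinset) (fun t => SimpleGraph.fromEdgeSet t)
    (fun G _ => mem_powerset.2 (SimpleGraph.edgeFinset_mono le_top)) (fun _ _ => mem_univ _)
    (fun G _ => by simp) (fun t ht => ?_) (fun _ _ => rfl)
  have ht : ∀ e ∈ t, ¬ e.IsDiag := fun e he => by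
    simpa using (mem_powerset.1 (mem_coe.1 ht)) he
  ext e
  simpa using fun he => ht e he

section RandomGraph

variable {n : ℕ} {p : ℝ}

lemma grProb_edgeFinset_eq_sum_powerset (Q : Finset (Sym2 (Fin n)) → Prop) :
    grProb n p (fun G => Q G.edgeFinset)
      = ∑ t ∈ (⊤ : SimpleGraph (Fin n)).edgeFinset.powerset,
          if Q t then p ^ #t * (1 - p) ^ (#(⊤ : SimpleGraph (Fin n)).edgeFinset - #t) else 0 := by
  rw [SimpleGraph.card_edgeFinset_top_eq_card_choose_two, Fintype.card_fin]
  unfold grProb edgeCount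
  exact sum_simpleGraph_eq_sum_powerset
    (fun t => if Q t then p ^ #t * (1 - p) ^ (n.choose 2 - #t) else 0)

/-- Expand `∏ (p + q_e)` over the edges `e` of `Kₙ`, where `q_e = 0` on `F` and `q_e = 1 - p` off
`F`. -/
lemma grProb_subset_edgeFinset {F : Finset (Sym2 (Fin n))}
    (hF : F ⊆ (⊤ : SimpleGraph (Fin n)).edgeFinset) :
    grProb n p (fun G => F ⊆ G.edgeFinset) = p ^ #F := by
  rw [grProb_edgeFinset_eq_sum_powerset]
  set U := (⊤ : SimpleGraph (Fin n)).edgeFinset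
  have hprod := prod_add (fun _ => p) (fun e => if e ∈ F then 0 else 1 - p) U
  have hlhs : ∏ e ∈ U, (p + if e ∈ F then 0 else 1 - p) = p ^ #F := by
    calc ∏ e ∈ U, (p + if e ∈ F then 0 else 1 - p) = ∏ e ∈ U, if e ∈ F then p else 1 :=
          prod_congr rfl fun e _ => by split_ifs <;> ring
      _ = p ^ #F := by rw [prod_ite_mem, inter_eq_right.2 hF, prod_const]
  have hterm : ∀ t ∈ U.powerset, (∏ _e ∈ t, p) * ∏ e ∈ U \ t, (if e ∈ F then 0 else 1 - p)
      = if F ⊆ t then p ^ #t * (1 - p) ^ (#U - #t) else 0 := by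
    intro t ht
    rw [prod_const, ← card_sdiff_of_subset (mem_powerset.1 ht)]
    split_ifs with hFt
    · rw [prod_congr rfl fun e he => if_neg fun heF => (mem_sdiff.1 he).2 (hFt heF), prod_const]
    · obtain ⟨e, heF, het⟩ := not_subset.1 hFt
      rw [Finset.prod_eq_zero (mem_sdiff.2 ⟨hF heF, het⟩) (by simp [heF]), mul_zero]
  rw [← hlhs, hprod]
  exact sum_congr rfl fun t ht => by convert (hterm t ht).symm

lemma grProb_true : grProb n p (fun _ => True) = 1 := by
  simpa using grProb_subset_edgeFinset (p := p) (empty_subset (⊤ : SimpleGraph (Fin n)).edgeFinset)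

lemma grProb_add_grProb_not (Q : SimpleGraph (Fin n) → Prop) :
    grProb n p Q + grProb n p (fun G => ¬ Q G) = 1 := by
  rw [← grProb_true (p := p), grProb, grProb, grProb, ← sum_add_distrib]
  exact sum_congr rfl fun G _ => by by_cases hQ : Q G <;> simp [hQ]

lemma pow_mul_one_sub_pow_nonneg (hp0 : 0 ≤ p) (hp1 : p ≤ 1) (a b : ℕ) :
    0 ≤ p ^ a * (1 - p) ^ b := by
  have : 0 ≤ 1 - p := by linarith
  positivity

lemma grProb_nonneg (hp0 : 0 ≤ p) (hp1 : p ≤ 1) (Q : SimpleGraph (Fin n) → Prop) :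
    0 ≤ grProb n p Q :=
  sum_nonneg fun _ _ => ite_nonneg (pow_mul_one_sub_pow_nonneg hp0 hp1 _ _) le_rfl

lemma grProb_le_sum (hp0 : 0 ≤ p) (hp1 : p ≤ 1) {ι : Type*} (s : Finset ι)
    {Q : SimpleGraph (Fin n) → Prop} {R : ι → SimpleGraph (Fin n) → Prop}
    (h : ∀ G, Q G → ∃ i ∈ s, R i G) :
    grProb n p Q ≤ ∑ i ∈ s, grProb n p (R i) := by
  unfold grProb
  rw [sum_comm]
  refine sum_le_sum fun G _ => ?_
  have hterm : ∀ i ∈ s, 0 ≤ if R i G then p ^ edgeCount G * (1 - p) ^ (n.choose 2 - edgeCount G)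
      else 0 := fun i _ => ite_nonneg (pow_mul_one_sub_pow_nonneg hp0 hp1 _ _) le_rfl
  split_ifs with hQ
  · obtain ⟨i, hi, hRi⟩ := h G hQ
    exact (if_pos hRi).symm.le.trans (single_le_sum hterm hi)
  · exact sum_nonneg hterm

lemma grProb_mono (hp0 : 0 ≤ p) (hp1 : p ≤ 1) {Q R : SimpleGraph (Fin n) → Prop}
    (h : ∀ G, Q G → R G) : grProb n p Q ≤ grProb n p R :=
  sum_le_sum fun G _ => by
    by_cases hQ : Q G
    · simp [hQ, h G hQ]
    · simpa [hQ] using ite_nonneg (pow_mul_one_sub_pow_nonneg hp0 hp1 _ _) le_rfl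

lemma grProb_le_choose_mul_pow (hp0 : 0 ≤ p) (hp1 : p ≤ 1) (T : Finset (Sym2 (Fin n)))
    (m : ℕ) :
    grProb n p (fun G => m ≤ #(G.edgeFinset ∩ T)) ≤ (#T).choose m * p ^ m := by
  set U := (⊤ : SimpleGraph (Fin n)).edgeFinset
  calc grProb n p (fun G => m ≤ #(G.edgeFinset ∩ T))
      ≤ ∑ F ∈ (U ∩ T).powersetCard m, grProb n p (fun G => F ⊆ G.edgeFinset) := by
        refine grProb_le_sum hp0 hp1 _ fun G hG => ?_
        obtain ⟨F, hF, rfl⟩ := exists_subset_card_eq hG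
        refine ⟨F, mem_powersetCard.2 ⟨fun e he => ?_, rfl⟩, hF.trans inter_subset_left⟩
        exact inter_subset_inter_right (SimpleGraph.edgeFinset_mono le_top) (hF he)
    _ = ∑ F ∈ (U ∩ T).powersetCard m, p ^ m := sum_congr rfl fun F hF => by
        obtain ⟨hFU, rfl⟩ := mem_powersetCard.1 hF
        exact grProb_subset_edgeFinset (hFU.trans inter_subset_left)
    _ ≤ (#T).choose m * p ^ m := by
        rw [sum_const, nsmul_eq_mul, card_powersetCard]
        gcongr
        exact inter_subset_right

end RandomGraph

lemma choose_mul_pow_le_exp_one_mul_div_pow (N m : ℕ) {x : ℝ} (hx : 0 ≤ x) :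
    (N.choose m : ℝ) * x ^ m ≤ (exp 1 * N * x / m) ^ m := by
  rcases m.eq_zero_or_pos with rfl | hm
  · simp
  have hm' : (m : ℝ) ≠ 0 := by positivity
  calc (N.choose m : ℝ) * x ^ m ≤ N ^ m / m.factorial * x ^ m := by
        gcongr; exact Nat.choose_le_pow_div (α := ℝ) m N
    _ = (N * x / m) ^ m * (m ^ m / m.factorial) := by
        rw [div_pow, mul_pow]; field_simp
    _ ≤ (N * x / m) ^ m * exp m := by
        gcongr; exact pow_div_factorial_le_exp (m : ℝ) m.cast_nonneg m
    _ = (exp 1 * N * x / m) ^ m := by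
        rw [← exp_one_pow]; ring

section Cut

variable {V : Type*} [Fintype V] (G : SimpleGraph V) (S : Finset V)

lemma sum_degree_eq_card_adj_add_crossCount :
    ∑ v ∈ S, G.degree v = #{e ∈ S ×ˢ S | G.Adj e.1 e.2} + crossCount G S := by
  have hdisj : Disjoint (S ×ˢ S) (S ×ˢ Sᶜ) := disjoint_product.2 (.inr disjoint_compl_right)
  rw [crossCount, ← card_union_of_disjoint (disjoint_filter_filter hdisj), ← filter_union,
    ← product_union, union_compl, card_filter, sum_product]
  refine sum_congr rfl fun v _ => ?_
  rw [← SimpleGraph.card_neighborFinset_eq_degree, SimpleGraph.neighborFinset_eq_filter,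
    card_filter]

lemma card_adj_le_two_mul_card_inter_sym2 [DecidableEq V] :
    #{e ∈ S ×ˢ S | G.Adj e.1 e.2} ≤ 2 * #(G.edgeFinset ∩ S.sym2) := by
  set A := {e ∈ S ×ˢ S | G.Adj e.1 e.2}
  have himage : (A.image Sym2.mk.uncurry : Finset (Sym2 V)) ⊆ G.edgeFinset ∩ S.sym2 := by
    intro z hz
    obtain ⟨⟨x, y⟩, hxy, rfl⟩ := mem_image.1 hz
    simp only [A, mem_filter, mem_product] at hxy
    simp [hxy]
  have hfiber : ∀ z ∈ A.image Sym2.mk.uncurry, #{a ∈ A | Sym2.mk.uncurry a = z} ≤ 2 := by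
    intro z hz
    obtain ⟨a, -, rfl⟩ := mem_image.1 hz
    calc #{b ∈ A | Sym2.mk.uncurry b = Sym2.mk.uncurry a} ≤ #{a, a.swap} :=
          card_le_card fun b hb => by
            rcases Sym2.mk_eq_mk_iff.1 (mem_filter.1 hb).2 with rfl | rfl <;> simp
      _ ≤ 2 := card_le_two
  exact (card_le_mul_card_image A 2 hfiber).trans (Nat.mul_le_mul_left 2 (card_le_card himage))

def IsBadSet (L : ℝ) : Prop :=
  (∀ v ∈ S, L / 6 < G.degree v) ∧ (crossCount G S : ℝ) < L / 10 * #S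

lemma IsBadSet.mul_div_lt_card_inter_sym2 [DecidableEq V] {L : ℝ} (h : IsBadSet G S L) :
    #S * L / 30 < #(G.edgeFinset ∩ S.sym2) := by
  have hdeg : #S * (L / 6) ≤ ∑ v ∈ S, (G.degree v : ℝ) := by
    simpa using sum_le_sum fun v hv => (h.1 v hv).le
  have hsplit : (∑ v ∈ S, G.degree v : ℝ) ≤ 2 * #(G.edgeFinset ∩ S.sym2) + crossCount G S := by
    exact_mod_cast (sum_degree_eq_card_adj_add_crossCount G S).le.trans
      (Nat.add_le_add_right (card_adj_le_two_mul_card_inter_sym2 G S) _)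
  linarith [h.2]

end Cut

lemma grProb_isBadSet_le {n : ℕ} {p L : ℝ} (hp0 : 0 ≤ p) (hp1 : p ≤ 1) (hL : 0 < L)
    (hL3 : 100 / L ^ 3 ≤ exp (-60)) (hp : p ≤ 1.1 * L / n) {S : Finset (Fin n)}
    (hS : S.Nonempty) (hSn : (#S : ℝ) ≤ n / L ^ 3) :
    grProb n p (fun G => IsBadSet G S L) ≤ exp (-2 * L) ^ #S := by
  set m := ⌈#S * L / 30⌉₊
  have hm : #S * L / 30 ≤ m := Nat.le_ceil _
  have hsym2 : (#S.sym2 : ℝ) ≤ (#S : ℝ) ^ 2 := by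
    calc (#S.sym2 : ℝ) ≤ #(S ×ˢ S) := by rw [sym2_eq_image]; exact_mod_cast card_image_le
      _ = (#S : ℝ) ^ 2 := by rw [card_product]; push_cast; ring
  have hs : (0 : ℝ) < #S := by exact_mod_cast hS.card_pos
  have hn : (0 : ℝ) < n := (div_pos_iff_of_pos_right (by positivity)).1 (hs.trans_le hSn)
  have hbase : exp 1 * #S.sym2 * p / m ≤ 100 / L ^ 3 :=
    calc exp 1 * #S.sym2 * p / m ≤ exp 1 * #S ^ 2 * (1.1 * L / n) / (#S * L / 30) := by
          gcongr
      _ = 33 * exp 1 * #S / n := by field_simp; ring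
      _ ≤ 100 * (n / L ^ 3) / n := by gcongr; linarith [exp_one_lt_three]
      _ = 100 / L ^ 3 := by field_simp
  calc grProb n p (fun G => IsBadSet G S L)
      ≤ grProb n p (fun G => m ≤ #(G.edgeFinset ∩ S.sym2)) :=
        grProb_mono hp0 hp1 fun G hG => Nat.ceil_le.2 hG.mul_div_lt_card_inter_sym2.le
    _ ≤ (#S.sym2).choose m * p ^ m := grProb_le_choose_mul_pow hp0 hp1 _ m
    _ ≤ (exp 1 * #S.sym2 * p / m) ^ m := choose_mul_pow_le_exp_one_mul_div_pow _ _ hp0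
    _ ≤ exp (-60) ^ m := by gcongr; exact hbase.trans hL3
    _ ≤ exp (-2 * L) ^ #S := by
        rw [← exp_nat_mul, ← exp_nat_mul]
        exact exp_le_exp.2 (by linarith)

lemma sum_pow_card_nonempty_le_exp_sub_one {α : Type*} [Fintype α] {c : ℝ} (hc : 0 ≤ c) :
    ∑ S : Finset α with S.Nonempty, c ^ #S ≤ exp (Fintype.card α * c) - 1 := by
  have hbinom : ∑ S : Finset α, c ^ #S = (c + 1) ^ Fintype.card α := by
    simpa using Fintype.sum_pow_mul_eq_add_pow α c 1
  have hfilter : ({S : Finset α | S.Nonempty} : Finset (Finset α)) = univ.erase ∅ := by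
    ext S; simp [nonempty_iff_ne_empty]
  rw [hfilter, sum_erase_eq_sub (mem_univ _), hbinom, card_empty, pow_zero, exp_nat_mul]
  gcongr
  linarith [add_one_le_exp c]

def ExpandsSmallLargeSets (n : ℕ) (G : SimpleGraph (Fin n)) : Prop :=
  ∀ S : Finset (Fin n), S.Nonempty →
    (∀ v ∈ S, Real.log n / 6 < (G.degree v : ℝ)) →
    (S.card : ℝ) ≤ (n : ℝ) / (Real.log n) ^ 3 →
    Real.log n / 10 * S.card ≤ (crossCount G S : ℝ)

lemma grProb_not_expandsSmallLargeSets_le {n : ℕ} {p : ℝ} (hp0 : 0 ≤ p) (hp1 : p ≤ 1)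
    (hL : 0 < log n) (hL3 : 100 / log n ^ 3 ≤ exp (-60)) (hp : p ≤ 1.1 * log n / n) :
    grProb n p (fun G => ¬ ExpandsSmallLargeSets n G) ≤ exp (n : ℝ)⁻¹ - 1 := by
  have hn : (0 : ℝ) < n := Nat.cast_pos.2 (Nat.pos_of_ne_zero (by rintro rfl; simp at hL))
  have hexp : exp (-2 * log n) = ((n : ℝ)⁻¹) ^ 2 := by
    rw [show -2 * log n = (2 : ℕ) * log (n : ℝ)⁻¹ by push_cast; rw [log_inv]; ring,
      exp_nat_mul, exp_log (inv_pos.2 hn)]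
  calc grProb n p (fun G => ¬ ExpandsSmallLargeSets n G)
      ≤ ∑ S : Finset (Fin n) with S.Nonempty ∧ (#S : ℝ) ≤ n / log n ^ 3,
          grProb n p (fun G => IsBadSet G S (log n)) := by
        refine grProb_le_sum hp0 hp1 _ fun G hG => ?_
        simp only [ExpandsSmallLargeSets, not_forall, not_le] at hG
        obtain ⟨S, hS, hdeg, hsize, hcross⟩ := hG
        exact ⟨S, mem_filter.2 ⟨mem_univ _, hS, hsize⟩, hdeg, hcross⟩
    _ ≤ ∑ S : Finset (Fin n) with S.Nonempty ∧ (#S : ℝ) ≤ n / log n ^ 3,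
          exp (-2 * log n) ^ #S :=
        sum_le_sum fun S hS => grProb_isBadSet_le hp0 hp1 hL hL3 hp (mem_filter.1 hS).2.1
          (mem_filter.1 hS).2.2
    _ ≤ ∑ S : Finset (Fin n) with S.Nonempty, exp (-2 * log n) ^ #S :=
        sum_le_sum_of_subset_of_nonneg
          (fun S hS => mem_filter.2 ⟨mem_univ _, (mem_filter.1 hS).2.1⟩)
          fun _ _ _ => by positivity
    _ ≤ exp (n * exp (-2 * log n)) - 1 := by
        simpa using sum_pow_card_nonempty_le_exp_sub_one (α := Fin n) (exp_pos _).le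
    _ = exp (n : ℝ)⁻¹ - 1 := by
        rw [hexp]; field_simp

theorem aas_expansion_small_large_sets_general (p : ℕ → ℝ) (hp0 : ∀ n, 0 ≤ p n) (hp1 : ∀ n, p n ≤ 1)
    (hhigh : ∀ᶠ n : ℕ in Filter.atTop, p n ≤ 1.1 * Real.log n / n) :
    Filter.Tendsto
      (fun n : ℕ => grProb n (p n) fun G =>
        ∀ S : Finset (Fin n), S.Nonempty →
          (∀ v ∈ S, Real.log n / 6 < (G.degree v : ℝ)) →
          (S.card : ℝ) ≤ (n : ℝ) / (Real.log n) ^ 3 →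
          Real.log n / 10 * S.card ≤ (crossCount G S : ℝ))
      Filter.atTop (nhds 1) := by
  have hlog : Tendsto (fun n : ℕ => log n) atTop atTop :=
    tendsto_log_atTop.comp tendsto_natCast_atTop_atTop
  have hsmall : Tendsto (fun n : ℕ => 100 / log n ^ 3) atTop (nhds 0) :=
    tendsto_const_nhds.div_atTop ((tendsto_pow_atTop three_ne_zero).comp hlog)
  have hupper : Tendsto (fun n : ℕ => exp (n : ℝ)⁻¹ - 1) atTop (nhds 0) := by
    simpa using ((continuous_exp.tendsto 0).comp
      (tendsto_inv_atTop_zero.comp tendsto_natCast_atTop_atTop)).sub_const 1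
  have hfail : Tendsto (fun n => grProb n (p n) (fun G => ¬ ExpandsSmallLargeSets n G))
      atTop (nhds 0) := by
    refine tendsto_of_tendsto_of_tendsto_of_le_of_le' tendsto_const_nhds hupper
      (Eventually.of_forall fun n => grProb_nonneg (hp0 n) (hp1 n) _) ?_
    filter_upwards [hhigh, hlog.eventually_gt_atTop 0,
      hsmall.eventually (ge_mem_nhds (exp_pos _))] with n hpn hL hL3
    exact grProb_not_expandsSmallLargeSets_le (hp0 n) (hp1 n) hL hL3 hpn
  have hcompl : ∀ n, grProb n (p n) (ExpandsSmallLargeSets n)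
      = 1 - grProb n (p n) (fun G => ¬ ExpandsSmallLargeSets n G) :=
    fun n => eq_sub_of_add_eq (grProb_add_grProb_not _)
  show Tendsto (fun n => grProb n (p n) (ExpandsSmallLargeSets n)) atTop (nhds 1)
  simpa only [sub_zero, ← hcompl] using hfail.const_sub 1

theorem aas_expansion_small_large_sets (p : ℕ → ℝ) (hp0 : ∀ n, 0 ≤ p n) (hp1 : ∀ n, p n ≤ 1)
    (hlow : Filter.Tendsto (fun n : ℕ => (n : ℝ) * p n - Real.log n) Filter.atTop Filter.atTop)
    (hhigh : ∀ᶠ n : ℕ in Filter.atTop, p n ≤ 1.1 * Real.log n / n) :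
    Filter.Tendsto
      (fun n : ℕ => grProb n (p n) fun G =>
        ∀ S : Finset (Fin n), S.Nonempty →
          (∀ v ∈ S, Real.log n / 6 < (G.degree v : ℝ)) →
          (S.card : ℝ) ≤ (n : ℝ) / (Real.log n) ^ 3 →
          Real.log n / 10 * S.card ≤ (crossCount G S : ℝ))
      Filter.atTop (nhds 1) :=
  aas_expansion_small_large_sets_general p hp0 hp1 hhigh
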